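/- Fix ε ≥ 0. Under Assumptions 1 and 2 (with 0 < c ≤ 1/2), f* minimizes the modified risk (1/2 − c)·P(|f(X)| ≤ ε) + P(Y f(X) < −ε) among all feasible discriminant functions: for every measurable feasible f : 𝒳 → ℝ, (1/2 − c)·P(|f*(X)| ≤ ε) + P(Y f*(X) < −ε) ≤ (1/2 − c)·P(|f(X)| ≤ ε) + P(Y f(X) < −ε). -/

import Mathlib

/-!
Relax the two noncoverage constraints with multipliers `a = (1/2 - c)/t₁` and
`b = (1/2 - c)/(1 - t₋₁)`, both `≥ 1` by Assumption 2. Given `η(x) = p`, predicting `v` then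
costs `a p` if `v < -ε`, `b (1 - p)` if `v > ε`, and `1/2 - c` if `|v| ≤ ε`; the multipliers make
the three costs tie at the thresholds, so `f*` picks a cheapest option at every `x` and minimises
the Lagrangian. The Lagrangian is the modified risk plus `(a - 1)` and `(b - 1)` times the two
class-wise misclassification masses; `f*` saturates both constraints and a feasible `f` does not
exceed them, so these extra terms are at least as large for `f*`, and subtracting them preserves
the inequality.
-/

open MeasureTheory ProbabilityTheory
open scoped ENNReal

theorem Real.measurable_sign : Measurable Real.sign :=
  Measurable.ite measurableSet_Iio measurable_const
    (Measurable.ite measurableSet_Ioi measurable_const measurable_const)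

noncomputable def thresholdRule (ε t₁ t₂ p : ℝ) : ℝ :=
  if t₂ < p then 1 + ε else if t₁ ≤ p then ε * Real.sign (p - 1 / 2) else -(1 + ε)

theorem measurable_thresholdRule (ε t₁ t₂ : ℝ) : Measurable (thresholdRule ε t₁ t₂) :=
  Measurable.ite measurableSet_Ioi measurable_const
    (Measurable.ite measurableSet_Ici
      (measurable_const.mul (Real.measurable_sign.comp (measurable_id.sub_const _)))
      measurable_const)

theorem abs_mul_sign_le {ε : ℝ} (hε : 0 ≤ ε) (r : ℝ) : |ε * Real.sign r| ≤ ε := by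
  rcases Real.sign_apply_eq r with h | h | h <;> simp [h, hε, abs_of_nonneg hε]

section thresholdRule

variable {ε t₁ t₂ p : ℝ}

theorem thresholdRule_lt_neg_iff (hε : 0 ≤ ε) (ht : t₁ ≤ t₂) :
    thresholdRule ε t₁ t₂ p < -ε ↔ p < t₁ := by
  have := abs_le.1 (abs_mul_sign_le hε (p - 1 / 2))
  unfold thresholdRule
  split_ifs <;> constructor <;> intro <;> linarith

theorem lt_thresholdRule_iff (hε : 0 ≤ ε) : ε < thresholdRule ε t₁ t₂ p ↔ t₂ < p := by
  have := abs_le.1 (abs_mul_sign_le hε (p - 1 / 2))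
  unfold thresholdRule
  split_ifs <;> constructor <;> intro <;> linarith

theorem setOf_thresholdRule_comp_lt_neg {α : Type*} {η : α → ℝ} (hε : 0 ≤ ε) (ht : t₁ ≤ t₂) :
    {x | (thresholdRule ε t₁ t₂ ∘ η) x < -ε} = {x | η x < t₁} :=
  Set.ext fun _ => thresholdRule_lt_neg_iff hε ht

theorem setOf_lt_thresholdRule_comp {α : Type*} {η : α → ℝ} (hε : 0 ≤ ε) :
    {x | ε < (thresholdRule ε t₁ t₂ ∘ η) x} = {x | t₂ < η x} :=
  Set.ext fun _ => lt_thresholdRule_iff hε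

end thresholdRule

/-- Conditional Lagrangian cost of predicting `v` at a point where `P(Y = 1 | X = x) = p`. -/
noncomputable def abstainCost (ε L a b p v : ℝ) : ℝ :=
  if v < -ε then a * p else if ε < v then b * (1 - p) else L

theorem abstainCost_thresholdRule_le {ε L a b t₁ t₂ : ℝ} (hε : 0 ≤ ε) (ht : t₁ ≤ t₂)
    (ha : 0 ≤ a) (hb : 0 ≤ b) (hat : a * t₁ = L) (hbt : b * (1 - t₂) = L) (p v : ℝ) :
    abstainCost ε L a b p (thresholdRule ε t₁ t₂ p) ≤ abstainCost ε L a b p v := by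
  simp only [abstainCost, thresholdRule_lt_neg_iff hε ht, lt_thresholdRule_iff hε]
  split_ifs <;> nlinarith

theorem lintegral_abstainCost {𝒳 : Type*} [MeasurableSpace 𝒳] {μ : Measure 𝒳} {g η : 𝒳 → ℝ}
    (hg : Measurable g) {ε L a b : ℝ} (hε : 0 ≤ ε) (ha : 0 ≤ a) (hb : 0 ≤ b) :
    ∫⁻ x, ENNReal.ofReal (abstainCost ε L a b (η x) (g x)) ∂μ
      = ENNReal.ofReal L * μ {x | |g x| ≤ ε}
        + ENNReal.ofReal a * ∫⁻ x in {x | g x < -ε}, ENNReal.ofReal (η x) ∂μ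
        + ENNReal.ofReal b * ∫⁻ x in {x | ε < g x}, ENNReal.ofReal (1 - η x) ∂μ := by
  have hm : MeasurableSet {x | |g x| ≤ ε} := measurableSet_le hg.abs measurable_const
  have hn : MeasurableSet {x | g x < -ε} := hg measurableSet_Iio
  have hp : MeasurableSet {x | ε < g x} := hg measurableSet_Ioi
  have hpartition : Set.univ = {x | |g x| ≤ ε} ∪ {x | g x < -ε} ∪ {x | ε < g x} := by
    ext x
    simp only [Set.mem_univ, Set.mem_union, Set.mem_ofPred_eq, abs_le, true_iff]
    rcases lt_or_ge (g x) (-ε) with hn | hn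
    · exact Or.inl (Or.inr hn)
    rcases lt_or_ge ε (g x) with hp | hp
    · exact Or.inr hp
    · exact Or.inl (Or.inl ⟨hn, hp⟩)
  have hdisj₁ : Disjoint {x | |g x| ≤ ε} {x | g x < -ε} :=
    Set.disjoint_left.2 fun x hm hn => by simp only [Set.mem_ofPred_eq, abs_le] at hm hn; linarith
  have hdisj₂ : Disjoint ({x | |g x| ≤ ε} ∪ {x | g x < -ε}) {x | ε < g x} :=
    Set.disjoint_left.2 fun x hmn hp => by
      simp only [Set.mem_union, Set.mem_ofPred_eq, abs_le] at hmn hp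
      rcases hmn with h | h <;> linarith
  rw [← setLIntegral_univ, hpartition, lintegral_union hp hdisj₂, lintegral_union hn hdisj₁,
    setLIntegral_congr_fun hm (g := fun _ => ENNReal.ofReal L) ?_,
    setLIntegral_congr_fun hn (g := fun x => ENNReal.ofReal a * ENNReal.ofReal (η x)) ?_,
    setLIntegral_congr_fun hp (g := fun x => ENNReal.ofReal b * ENNReal.ofReal (1 - η x)) ?_,
    setLIntegral_const, lintegral_const_mul' _ _ ENNReal.ofReal_ne_top,
    lintegral_const_mul' _ _ ENNReal.ofReal_ne_top]
  · intro x hx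
    simp only [Set.mem_ofPred_eq] at hx
    dsimp only [abstainCost]
    rw [if_neg (by linarith), if_pos hx, ENNReal.ofReal_mul hb]
  · intro x hx
    simp only [Set.mem_ofPred_eq] at hx
    dsimp only [abstainCost]
    rw [if_pos hx, ENNReal.ofReal_mul ha]
  · intro x hx
    simp only [Set.mem_ofPred_eq, abs_le] at hx
    dsimp only [abstainCost]
    rw [if_neg (by linarith), if_neg (by linarith)]

theorem add_le_add_of_weighted_add_le {A A' K K' M M' : ℝ≥0∞} {a b : ℝ} (ha : 1 ≤ a) (hb : 1 ≤ b)
    (hK : K ≠ ∞) (hM : M ≠ ∞) (hK' : K' ≤ K) (hM' : M' ≤ M)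
    (h : A + ENNReal.ofReal a * K + ENNReal.ofReal b * M
      ≤ A' + ENNReal.ofReal a * K' + ENNReal.ofReal b * M') :
    A + (K + M) ≤ A' + (K' + M') := by
  have hsplit : ∀ {r : ℝ}, 1 ≤ r → ENNReal.ofReal r = 1 + ENNReal.ofReal (r - 1) := fun hr => by
    rw [← ENNReal.ofReal_one, ← ENNReal.ofReal_add zero_le_one (by linarith), add_sub_cancel]
  refine ENNReal.le_of_add_le_add_right
    (a := ENNReal.ofReal (a - 1) * K + ENNReal.ofReal (b - 1) * M) (by finiteness) ?_
  calc A + (K + M) + (ENNReal.ofReal (a - 1) * K + ENNReal.ofReal (b - 1) * M)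
      = A + ENNReal.ofReal a * K + ENNReal.ofReal b * M := by rw [hsplit ha, hsplit hb]; ring
    _ ≤ A' + ENNReal.ofReal a * K' + ENNReal.ofReal b * M' := h
    _ = A' + (K' + M') + (ENNReal.ofReal (a - 1) * K' + ENNReal.ofReal (b - 1) * M') := by
      rw [hsplit ha, hsplit hb]; ring
    _ ≤ A' + (K' + M') + (ENNReal.ofReal (a - 1) * K + ENNReal.ofReal (b - 1) * M) := by gcongr

theorem MeasureTheory.Measure.real_add_le_of_ofReal_mul_add_le {Ω : Type*} [MeasurableSpace Ω]
    {P : Measure Ω} [IsFiniteMeasure P] {L : ℝ} (hL : 0 ≤ L) {s t s' t' : Set Ω}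
    (h : ENNReal.ofReal L * P s + P t ≤ ENNReal.ofReal L * P s' + P t') :
    L * P.real s + P.real t ≤ L * P.real s' + P.real t' := by
  have := ENNReal.toReal_mono (by finiteness) h
  rwa [ENNReal.toReal_add (by finiteness) (by finiteness),
    ENNReal.toReal_add (by finiteness) (by finiteness), ENNReal.toReal_mul, ENNReal.toReal_mul,
    ENNReal.toReal_ofReal hL] at this

section Regression

variable {Ω 𝒳 : Type*} [MeasurableSpace Ω] {P : Measure Ω} {X : Ω → 𝒳} {Y : Ω → ℝ}

theorem measurableSet_setOf_eq (hY : Measurable Y) (j : ℝ) : MeasurableSet {ω | Y ω = j} :=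
  hY (measurableSet_singleton j)

theorem measure_eq_add_of_eq_one_or_eq_neg_one (hY : Measurable Y)
    (hYval : ∀ ω, Y ω = 1 ∨ Y ω = -1) (S : Set Ω) :
    P S = P {ω | ω ∈ S ∧ Y ω = 1} + P {ω | ω ∈ S ∧ Y ω = -1} := by
  rw [← measure_inter_add_sdiff S (measurableSet_setOf_eq hY 1)]
  congr 2
  ext ω
  rcases hYval ω with h | h <;> norm_num [h]

theorem measure_mul_lt_neg_eq (hY : Measurable Y) (hYval : ∀ ω, Y ω = 1 ∨ Y ω = -1)
    (g : 𝒳 → ℝ) (ε : ℝ) :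
    P {ω | Y ω * g (X ω) < -ε}
      = P {ω | X ω ∈ {x | g x < -ε} ∧ Y ω = 1} + P {ω | X ω ∈ {x | ε < g x} ∧ Y ω = -1} := by
  rw [measure_eq_add_of_eq_one_or_eq_neg_one hY hYval]
  congr 2 <;> ext ω <;> refine and_congr_left fun h => ?_ <;> simp [h]

theorem measure_mem_and_eq_neg_one [MeasurableSpace 𝒳] [IsFiniteMeasure P] (hX : Measurable X)
    (hY : Measurable Y) (hYval : ∀ ω, Y ω = 1 ∨ Y ω = -1) {η : 𝒳 → ℝ} (hη : Measurable η)
    (hη01 : ∀ x, η x ∈ Set.Icc (0 : ℝ) 1) {B : Set 𝒳} (hB : MeasurableSet B)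
    (hreg : P {ω | X ω ∈ B ∧ Y ω = 1} = ∫⁻ x in B, ENNReal.ofReal (η x) ∂P.map X) :
    P {ω | X ω ∈ B ∧ Y ω = -1} = ∫⁻ x in B, ENNReal.ofReal (1 - η x) ∂P.map X := by
  have htotal : ∫⁻ x in B, ENNReal.ofReal (η x) ∂P.map X
      + ∫⁻ x in B, ENNReal.ofReal (1 - η x) ∂P.map X = P.map X B := by
    rw [← lintegral_add_left hη.ennreal_ofReal, ← setLIntegral_one]
    refine setLIntegral_congr_fun hB fun x _ => ?_
    rw [← ENNReal.ofReal_add (hη01 x).1 (sub_nonneg.2 (hη01 x).2), add_sub_cancel,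
      ENNReal.ofReal_one]
  rw [← ENNReal.add_right_inj (hreg ▸ measure_ne_top P _), htotal, ← hreg,
    Measure.map_apply hX hB, measure_eq_add_of_eq_one_or_eq_neg_one hY hYval (X ⁻¹' B)]
  rfl

theorem measure_mem_and_eq_cond_mul [IsFiniteMeasure P] (hY : Measurable Y) (A : Set 𝒳) (j : ℝ) :
    P {ω | X ω ∈ A ∧ Y ω = j} = P[|{ω | Y ω = j}] (X ⁻¹' A) * P {ω | Y ω = j} := by
  rw [cond_mul_eq_inter (measurableSet_setOf_eq hY j), Set.inter_comm]
  rfl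

theorem cond_eq_one_mul_lt_neg (hY : Measurable Y) (g : 𝒳 → ℝ) (ε : ℝ) :
    P[|{ω | Y ω = 1}] {ω | Y ω * g (X ω) < -ε} = P[|{ω | Y ω = 1}] (X ⁻¹' {x | g x < -ε}) := by
  rw [← cond_inter_self (measurableSet_setOf_eq hY 1),
    ← cond_inter_self (measurableSet_setOf_eq hY 1) (X ⁻¹' _)]
  congr 1
  ext ω
  exact and_congr_right fun (h : Y ω = _) => by simp [h]

theorem cond_eq_neg_one_mul_lt_neg (hY : Measurable Y) (g : 𝒳 → ℝ) (ε : ℝ) :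
    P[|{ω | Y ω = -1}] {ω | Y ω * g (X ω) < -ε} = P[|{ω | Y ω = -1}] (X ⁻¹' {x | ε < g x}) := by
  rw [← cond_inter_self (measurableSet_setOf_eq hY (-1)),
    ← cond_inter_self (measurableSet_setOf_eq hY (-1)) (X ⁻¹' _)]
  congr 1
  ext ω
  exact and_congr_right fun (h : Y ω = _) => by simp [h]

theorem lintegral_abstainCost_map [MeasurableSpace 𝒳] [IsFiniteMeasure P] (hX : Measurable X)
    (hY : Measurable Y) (hYval : ∀ ω, Y ω = 1 ∨ Y ω = -1) {η : 𝒳 → ℝ} (hη : Measurable η)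
    (hη01 : ∀ x, η x ∈ Set.Icc (0 : ℝ) 1)
    (hreg : ∀ A : Set 𝒳, MeasurableSet A →
      P {ω | X ω ∈ A ∧ Y ω = 1} = ∫⁻ x in A, ENNReal.ofReal (η x) ∂P.map X)
    {g : 𝒳 → ℝ} (hg : Measurable g) {ε L a b : ℝ} (hε : 0 ≤ ε) (ha : 0 ≤ a) (hb : 0 ≤ b) :
    ∫⁻ x, ENNReal.ofReal (abstainCost ε L a b (η x) (g x)) ∂P.map X
      = ENNReal.ofReal L * P {ω | |g (X ω)| ≤ ε}
        + ENNReal.ofReal a * P {ω | X ω ∈ {x | g x < -ε} ∧ Y ω = 1}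
        + ENNReal.ofReal b * P {ω | X ω ∈ {x | ε < g x} ∧ Y ω = -1} := by
  have hn : MeasurableSet {x | g x < -ε} := hg measurableSet_Iio
  have hp : MeasurableSet {x | ε < g x} := hg measurableSet_Ioi
  rw [lintegral_abstainCost hg hε ha hb, hreg _ hn,
    measure_mem_and_eq_neg_one hX hY hYval hη hη01 hp (hreg _ hp),
    Measure.map_apply hX (measurableSet_le hg.abs measurable_const)]
  rfl

end Regression

theorem fstar_minimizes_modified_risk_general
    {𝒳 : Type*} [MeasurableSpace 𝒳]
    {Ω : Type*} [MeasurableSpace Ω] (P : Measure Ω) [IsProbabilityMeasure P]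
    (X : Ω → 𝒳) (Y : Ω → ℝ) (hX : Measurable X) (hY : Measurable Y)
    (hYval : ∀ ω, Y ω = 1 ∨ Y ω = -1)
    -- η is a measurable version of the regression function x ↦ P(Y = 1 ∣ X = x)
    (η : 𝒳 → ℝ) (hη : Measurable η) (hη01 : ∀ x, η x ∈ Set.Icc (0 : ℝ) 1)
    (hreg : ∀ A : Set 𝒳, MeasurableSet A →
      P {ω | X ω ∈ A ∧ Y ω = 1} = ∫⁻ x in A, ENNReal.ofReal (η x) ∂(P.map X))
    -- noncoverage levels and thresholds
    (αm α1 : ℝ) (hαm : αm ∈ Set.Ioo (0 : ℝ) 1) (hα1 : α1 ∈ Set.Ioo (0 : ℝ) 1)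
    (tm t1 : ℝ)
    (htm : P[|{ω | Y ω = -1}] {ω | tm < η (X ω)} = ENNReal.ofReal αm)
    (ht1 : P[|{ω | Y ω = 1}] {ω | η (X ω) < t1} = ENNReal.ofReal α1)
    -- Assumption 2
    (c : ℝ) (hc : 0 < c) (hctm : c ≤ tm - 1 / 2) (hct1 : c ≤ 1 / 2 - t1)
    (ε : ℝ) (hε : 0 ≤ ε)
    -- the Bayes-type rule f*
    (fstar : 𝒳 → ℝ)
    (hfstar : ∀ x, fstar x =
      if tm < η x then 1 + ε
      else if t1 ≤ η x then ε * Real.sign (η x - 1 / 2)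
      else -(1 + ε))
    -- an arbitrary measurable feasible competitor f
    (f : 𝒳 → ℝ) (hf : Measurable f)
    (hfeasm : P[|{ω | Y ω = -1}] {ω | Y ω * f (X ω) < -ε} ≤ ENNReal.ofReal αm)
    (hfeas1 : P[|{ω | Y ω = 1}] {ω | Y ω * f (X ω) < -ε} ≤ ENNReal.ofReal α1) :
    (1 / 2 - c) * (P {ω | |fstar (X ω)| ≤ ε}).toReal
      + (P {ω | Y ω * fstar (X ω) < -ε}).toReal
    ≤ (1 / 2 - c) * (P {ω | |f (X ω)| ≤ ε}).toReal
      + (P {ω | Y ω * f (X ω) < -ε}).toReal := by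
  obtain rfl : fstar = thresholdRule ε t1 tm ∘ η := funext hfstar
  obtain ⟨ω₁, hω₁⟩ := nonempty_of_measure_ne_zero (ht1.trans_ne (ENNReal.ofReal_pos.2 hα1.1).ne')
  obtain ⟨ωm, hωm⟩ := nonempty_of_measure_ne_zero (htm.trans_ne (ENNReal.ofReal_pos.2 hαm.1).ne')
  have ht1pos : 0 < t1 := (hη01 _).1.trans_lt hω₁
  have htm1 : 0 < 1 - tm := sub_pos.2 (hωm.trans_le (hη01 _).2)
  have ht1tm : t1 ≤ tm := by linarith
  obtain ⟨a, ha, hat⟩ : ∃ a, 1 ≤ a ∧ a * t1 = 1 / 2 - c :=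
    ⟨_, (one_le_div ht1pos).2 (by linarith), div_mul_cancel₀ _ ht1pos.ne'⟩
  obtain ⟨b, hb, hbt⟩ : ∃ b, 1 ≤ b ∧ b * (1 - tm) = 1 / 2 - c :=
    ⟨_, (one_le_div htm1).2 (by linarith), div_mul_cancel₀ _ htm1.ne'⟩
  have ha0 : 0 ≤ a := by linarith
  have hb0 : 0 ≤ b := by linarith
  have hlag := (lintegral_abstainCost_map hX hY hYval hη hη01 hreg
      ((measurable_thresholdRule ε t1 tm).comp hη) hε ha0 hb0).symm.trans_le <|
    (lintegral_mono fun x => ENNReal.ofReal_le_ofReal <|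
      abstainCost_thresholdRule_le hε ht1tm ha0 hb0 hat hbt (η x) (f x)).trans_eq
    (lintegral_abstainCost_map hX hY hYval hη hη01 hreg hf hε ha0 hb0)
  have hK1 : P {ω | X ω ∈ {x | f x < -ε} ∧ Y ω = 1}
      ≤ P {ω | X ω ∈ {x | (thresholdRule ε t1 tm ∘ η) x < -ε} ∧ Y ω = 1} := by
    rw [measure_mem_and_eq_cond_mul hY, measure_mem_and_eq_cond_mul hY,
      ← cond_eq_one_mul_lt_neg hY, setOf_thresholdRule_comp_lt_neg hε ht1tm]
    exact mul_le_mul_left (hfeas1.trans ht1.ge) _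
  have hKm : P {ω | X ω ∈ {x | ε < f x} ∧ Y ω = -1}
      ≤ P {ω | X ω ∈ {x | ε < (thresholdRule ε t1 tm ∘ η) x} ∧ Y ω = -1} := by
    rw [measure_mem_and_eq_cond_mul hY, measure_mem_and_eq_cond_mul hY,
      ← cond_eq_neg_one_mul_lt_neg hY, setOf_lt_thresholdRule_comp hε]
    exact mul_le_mul_left (hfeasm.trans htm.ge) _
  have hrisk := add_le_add_of_weighted_add_le ha hb (measure_ne_top _ _) (measure_ne_top _ _)
    hK1 hKm hlag
  rw [← measure_mul_lt_neg_eq hY hYval, ← measure_mul_lt_neg_eq hY hYval] at hrisk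
  exact Measure.real_add_le_of_ofReal_mul_add_le (by linarith) hrisk

/-- Under Assumptions 1 and 2 (with 0 < c ≤ 1/2), `f*` minimizes the modified risk `(1/2 − c)·P(|f(X)| ≤ ε) + P(Y f(X) < −ε)` among all measurable feasible discriminant functions. -/
theorem fstar_minimizes_modified_risk
    {𝒳 : Type*} [MeasurableSpace 𝒳]
    {Ω : Type*} [MeasurableSpace Ω] (P : Measure Ω) [IsProbabilityMeasure P]
    (X : Ω → 𝒳) (Y : Ω → ℝ) (hX : Measurable X) (hY : Measurable Y)
    (hYval : ∀ ω, Y ω = 1 ∨ Y ω = -1)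
    (hpos1 : 0 < P {ω | Y ω = 1}) (hposm : 0 < P {ω | Y ω = -1})
    -- η is a measurable version of the regression function x ↦ P(Y = 1 ∣ X = x)
    (η : 𝒳 → ℝ) (hη : Measurable η) (hη01 : ∀ x, η x ∈ Set.Icc (0 : ℝ) 1)
    (hreg : ∀ A : Set 𝒳, MeasurableSet A →
      P {ω | X ω ∈ A ∧ Y ω = 1} = ∫⁻ x in A, ENNReal.ofReal (η x) ∂(P.map X))
    -- noncoverage levels and thresholds
    (αm α1 : ℝ) (hαm : αm ∈ Set.Ioo (0 : ℝ) 1) (hα1 : α1 ∈ Set.Ioo (0 : ℝ) 1)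
    (tm t1 : ℝ)
    (htm : P[|{ω | Y ω = -1}] {ω | tm < η (X ω)} = ENNReal.ofReal αm)
    (ht1 : P[|{ω | Y ω = 1}] {ω | η (X ω) < t1} = ENNReal.ofReal α1)
    -- Assumption 1: the distribution of η(X) is atomless under both class-conditional
    -- distributions, and t1 ≤ 1/2 ≤ tm
    (hatomlessm : ∀ t : ℝ, P[|{ω | Y ω = -1}] {ω | η (X ω) = t} = 0)
    (hatomless1 : ∀ t : ℝ, P[|{ω | Y ω = 1}] {ω | η (X ω) = t} = 0)
    (ht1half : t1 ≤ 1 / 2) (hhalftm : 1 / 2 ≤ tm)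
    -- Assumption 2
    (c : ℝ) (hc : 0 < c) (hctm : c ≤ tm - 1 / 2) (hct1 : c ≤ 1 / 2 - t1)    (hchalf : c ≤ 1 / 2)
    (ε : ℝ) (hε : 0 ≤ ε)
    -- the Bayes-type rule f*
    (fstar : 𝒳 → ℝ)
    (hfstar : ∀ x, fstar x =
      if tm < η x then 1 + ε
      else if t1 ≤ η x then ε * Real.sign (η x - 1 / 2)
      else -(1 + ε))
    -- an arbitrary measurable feasible competitor f
    (f : 𝒳 → ℝ) (hf : Measurable f)
    (hfeasm : P[|{ω | Y ω = -1}] {ω | Y ω * f (X ω) < -ε} ≤ ENNReal.ofReal αm)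
    (hfeas1 : P[|{ω | Y ω = 1}] {ω | Y ω * f (X ω) < -ε} ≤ ENNReal.ofReal α1) :
    (1 / 2 - c) * (P {ω | |fstar (X ω)| ≤ ε}).toReal
      + (P {ω | Y ω * fstar (X ω) < -ε}).toReal
    ≤ (1 / 2 - c) * (P {ω | |f (X ω)| ≤ ε}).toReal
      + (P {ω | Y ω * f (X ω) < -ε}).toReal :=
  fstar_minimizes_modified_risk_general P X Y hX hY hYval η hη hη01 hreg αm α1 hαm hα1 tm t1 htm ht1
    c hc hctm hct1 ε hε fstar hfstar f hf hfeasm hfeas1
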